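/- arXiv:2103.14873 — 4 statements merged into one kernel-verified Lean document; each statement's English description precedes it below -/
import Mathlib

section
/- Let φ ∈ ℝ³ with φ ≠ 0 and set θ = ‖φ‖ (Euclidean norm). Then the series Γ₁(skew(φ)) = Σ_{n=0}^∞ (1/(n+1)!)·skew(φ)ⁿ converges and equals I₃ + ((1 − cos θ)/θ²)·skew(φ) + ((θ − sin θ)/θ³)·skew(φ)², where I₃ is the 3×3 identity matrix; this matrix is the left Jacobian of SO(3). -/
/-!
The matrix `A = skew φ` satisfies `A ^ 3 = -θ ^ 2 • A` with `θ = ‖φ‖` (its characteristic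
polynomial is `X ^ 3 + θ ^ 2 X`). Hence `A ^ (2k+1) = (-θ ^ 2) ^ k • A` and
`A ^ (2k+2) = (-θ ^ 2) ^ k • A ^ 2`, and splitting `Γ₁(A)` by the parity of the exponent
leaves two scalar series, which are the tails of the Taylor series of `cos θ` and `sin θ`
divided by `θ ^ 2` and `θ ^ 3`.
-/

open Matrix

/-- The skew-symmetric matrix of a vector `ω ∈ ℝ³`, so that `skew ω *ᵥ v = ω × v`. -/
def skew (ω : EuclideanSpace ℝ (Fin 3)) : Matrix (Fin 3) (Fin 3) ℝ :=
  !![0, -ω 2, ω 1; ω 2, 0, -ω 0; -ω 1, ω 0, 0]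

theorem skew_pow_three (φ : EuclideanSpace ℝ (Fin 3)) :
    skew φ ^ 3 = (-‖φ‖ ^ 2) • skew φ := by
  rw [EuclideanSpace.norm_sq_eq]
  ext i j
  fin_cases i <;> fin_cases j <;>
    simp [skew, pow_succ, Matrix.mul_apply, Fin.sum_univ_three] <;> ring

section PowThree

variable {R : Type*} [Ring R] [Algebra ℝ R] {A : R} {c : ℝ}

theorem pow_two_mul_add_one_of_pow_three_eq_smul (h : A ^ 3 = c • A) (k : ℕ) :
    A ^ (2 * k + 1) = c ^ k • A := by
  induction k with
  | zero => simp
  | succ k ih =>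
    rw [show 2 * (k + 1) + 1 = (2 * k + 1) + 2 by ring, pow_add, ih, smul_mul_assoc, ← pow_succ',
      h, smul_smul, pow_succ]

theorem pow_two_mul_add_two_of_pow_three_eq_smul (h : A ^ 3 = c • A) (k : ℕ) :
    A ^ (2 * k + 2) = c ^ k • A ^ 2 := by
  rw [pow_succ, pow_two_mul_add_one_of_pow_three_eq_smul h, smul_mul_assoc, sq]

end PowThree

theorem Real.hasSum_one_sub_cos_div_sq {θ : ℝ} (hθ : θ ≠ 0) :
    HasSum (fun k : ℕ => (-θ ^ 2) ^ k / (2 * k + 2).factorial) ((1 - Real.cos θ) / θ ^ 2) := by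
  have tail := (hasSum_nat_add_iff' 1).mpr (Real.hasSum_cos θ)
  norm_num at tail
  rw [← neg_sub]
  refine (tail.neg.div_const (θ ^ 2)).congr_fun fun k => ?_
  rw [neg_pow, ← pow_mul]
  field_simp
  ring_nf

theorem Real.hasSum_sub_sin_div_cube {θ : ℝ} (hθ : θ ≠ 0) :
    HasSum (fun k : ℕ => (-θ ^ 2) ^ k / (2 * k + 3).factorial) ((θ - Real.sin θ) / θ ^ 3) := by
  have tail := (hasSum_nat_add_iff' 1).mpr (Real.hasSum_sin θ)
  norm_num at tail
  rw [← neg_sub]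
  refine (tail.neg.div_const (θ ^ 3)).congr_fun fun k => ?_
  rw [neg_pow, ← pow_mul]
  field_simp
  ring_nf

theorem hasSum_inv_factorial_succ_smul_pow_of_pow_three_eq_smul {R : Type*} [Ring R]
    [Algebra ℝ R] [TopologicalSpace R] [ContinuousAdd R] [ContinuousSMul ℝ R] {A : R} {θ : ℝ}
    (hθ : θ ≠ 0) (h : A ^ 3 = (-θ ^ 2) • A) :
    HasSum (fun n : ℕ => ((n + 1).factorial : ℝ)⁻¹ • A ^ n)
      (1 + ((1 - Real.cos θ) / θ ^ 2) • A + ((θ - Real.sin θ) / θ ^ 3) • A ^ 2) := by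
  set f : ℕ → R := fun n => ((n + 1).factorial : ℝ)⁻¹ • A ^ n
  have odd : HasSum (fun k => f (2 * k + 1)) (((1 - Real.cos θ) / θ ^ 2) • A) := by
    refine ((Real.hasSum_one_sub_cos_div_sq hθ).smul_const A).congr_fun fun k => ?_
    simp only [f]
    rw [pow_two_mul_add_one_of_pow_three_eq_smul h, smul_smul, inv_mul_eq_div]
  have even : HasSum (fun k => f (2 * k + 2)) (((θ - Real.sin θ) / θ ^ 3) • A ^ 2) := by
    refine ((Real.hasSum_sub_sin_div_cube hθ).smul_const (A ^ 2)).congr_fun fun k => ?_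
    simp only [f]
    rw [pow_two_mul_add_two_of_pow_three_eq_smul h, smul_smul, inv_mul_eq_div]
  have tail := HasSum.zero_add (HasSum.even_add_odd (f := fun n => f (n + 1)) odd even)
  simpa only [add_assoc, f, zero_add, Nat.factorial_one, Nat.cast_one, inv_one, pow_zero,
    one_smul] using tail

/-- The series `Γ₁(skew φ) = Σ_{n=0}^∞ skew(φ)ⁿ/(n+1)!` converges to the left Jacobian
of `SO(3)`: `I + ((1 − cos θ)/θ²)·skew φ + ((θ − sin θ)/θ³)·skew(φ)²` with `θ = ‖φ‖`. -/
theorem gamma_one_skew (φ : EuclideanSpace ℝ (Fin 3)) (hφ : φ ≠ 0) :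
    HasSum (fun n : ℕ => (((n + 1).factorial : ℝ))⁻¹ • skew φ ^ n)
      (1 + ((1 - Real.cos ‖φ‖) / ‖φ‖ ^ 2) • skew φ
        + ((‖φ‖ - Real.sin ‖φ‖) / ‖φ‖ ^ 3) • (skew φ * skew φ)) := by
  rw [← sq]
  exact hasSum_inv_factorial_succ_smul_pow_of_pow_three_eq_smul (norm_ne_zero_iff.mpr hφ)
    (skew_pow_three φ)
end

section
/- Let n be a positive integer, K an n×n real matrix, and Δ > 0. Then ∫₀^Δ Γ₁(t·K)·t dt = Γ₂(Δ·K)·Δ², where the integral is taken entrywise. Equivalently, the iterated integral ∫₀^Δ ∫₀^{t₂} exp(t₁·K) dt₁ dt₂ equals Γ₂(Δ·K)·Δ². -/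
open Matrix

/-- `Γ_m(A) = Σ_{n=0}^∞ Aⁿ/(n+m)!`. -/
noncomputable def Gamma {d : ℕ} (m : ℕ) (A : Matrix (Fin d) (Fin d) ℝ) :
    Matrix (Fin d) (Fin d) ℝ :=
  ∑' n : ℕ, (((n + m).factorial : ℝ))⁻¹ • A ^ n

/-!
The function `t ↦ t^{m+1} Γ_{m+1}(tK) = Σ_n t^{n+m+1} Kⁿ/(n+m+1)!` vanishes at `0`, and
differentiating its series term by term (locally uniform convergence) shows that its derivative is
`t ↦ t^m Γ_m(tK)`. Both claims then follow from the fundamental theorem of calculus: the first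
for `m = 1`, the second for `m = 0` on the inner integral (as `exp(t₁K) = Γ₀(t₁K)`) and `m = 1` on
the outer one. The analysis works in any real Banach algebra; matrices are given the `L^∞`
operator norm, which induces their usual topology.
-/

open Nat

/-- `scaledGamma m a t = t ^ m • Γ_m(t • a)`. -/
noncomputable def scaledGamma {𝔸 : Type*} [Ring 𝔸] [Algebra ℝ 𝔸] [TopologicalSpace 𝔸]
    (m : ℕ) (a : 𝔸) (t : ℝ) : 𝔸 :=
  ∑' n : ℕ, ((n + m)! : ℝ)⁻¹ • t ^ (n + m) • a ^ n

theorem exp_smul_eq_scaledGamma_zero {𝔸 : Type*} [Ring 𝔸] [Algebra ℝ 𝔸] [TopologicalSpace 𝔸]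
    [IsTopologicalRing 𝔸] (a : 𝔸) (t : ℝ) :
    NormedSpace.exp (t • a) = scaledGamma 0 a t := by
  simp [NormedSpace.exp_eq_tsum ℝ, scaledGamma, smul_pow]

section NormedAlgebra

variable {𝔸 : Type*} [NormedRing 𝔸] [NormedAlgebra ℝ 𝔸]

lemma norm_scaledGamma_term_le (m n : ℕ) (a : 𝔸) {t R : ℝ} (ht : ‖t‖ ≤ R) :
    ‖((n + m)! : ℝ)⁻¹ • t ^ (n + m) • a ^ n‖ ≤ R ^ m * ‖(n !⁻¹ : ℝ) • (R • a) ^ n‖ := by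
  have hR : 0 ≤ R := (norm_nonneg t).trans ht
  have hfact : ((n + m)! : ℝ)⁻¹ ≤ (n ! : ℝ)⁻¹ :=
    inv_anti₀ (by positivity) (by exact_mod_cast factorial_le (le_add_right n m))
  calc ‖((n + m)! : ℝ)⁻¹ • t ^ (n + m) • a ^ n‖
      = ((n + m)! : ℝ)⁻¹ * (‖t‖ ^ (n + m) * ‖a ^ n‖) := by
        rw [norm_smul, norm_smul, norm_pow t, norm_inv, RCLike.norm_natCast]
    _ ≤ (n ! : ℝ)⁻¹ * (R ^ (n + m) * ‖a ^ n‖) := by gcongr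
    _ = R ^ m * ‖(n !⁻¹ : ℝ) • (R • a) ^ n‖ := by
        rw [smul_pow, norm_smul, norm_smul, norm_inv, RCLike.norm_natCast, norm_pow R,
          Real.norm_of_nonneg hR, pow_add]
        ring

lemma summable_scaledGamma_bound (m : ℕ) (a : 𝔸) (R : ℝ) :
    Summable fun n : ℕ => R ^ m * ‖(n !⁻¹ : ℝ) • (R • a) ^ n‖ :=
  (NormedSpace.norm_expSeries_summable' (R • a)).mul_left _

lemma hasDerivAt_scaledGamma_term (m n : ℕ) (a : 𝔸) (t : ℝ) :
    HasDerivAt (fun s : ℝ => ((n + (m + 1))! : ℝ)⁻¹ • s ^ (n + (m + 1)) • a ^ n)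
      (((n + m)! : ℝ)⁻¹ • t ^ (n + m) • a ^ n) t := by
  refine (((hasDerivAt_pow (n + (m + 1)) t).smul_const (a ^ n)).const_smul
    ((n + (m + 1))! : ℝ)⁻¹).congr_deriv ?_
  rw [smul_smul, smul_smul, ← add_assoc, Nat.add_sub_cancel, factorial_succ]
  congr 1
  push_cast
  field_simp

variable [CompleteSpace 𝔸]

theorem hasDerivAt_scaledGamma_succ (m : ℕ) (a : 𝔸) (t : ℝ) :
    HasDerivAt (scaledGamma (m + 1) a) (scaledGamma m a t) t :=
  hasDerivAt_tsum_of_isPreconnected (summable_scaledGamma_bound m a (‖t‖ + 1))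
    Metric.isOpen_ball (convex_ball 0 _).isPreconnected
    (fun n s _ => hasDerivAt_scaledGamma_term m n a s)
    (fun n s hs => norm_scaledGamma_term_le m n a (mem_ball_zero_iff.1 hs).le)
    (Metric.mem_ball_self (by positivity)) (by simp) (mem_ball_zero_iff.2 (lt_add_one _))

theorem continuous_scaledGamma (m : ℕ) (a : 𝔸) : Continuous (scaledGamma m a) := by
  refine continuous_iff_continuousAt.2 fun t => ?_
  refine (continuousOn_tsum (fun n => by fun_prop) (summable_scaledGamma_bound m a (‖t‖ + 1))
    (fun n s hs => norm_scaledGamma_term_le m n a (mem_ball_zero_iff.1 hs).le)).continuousAt ?_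
  exact Metric.isOpen_ball.mem_nhds (mem_ball_zero_iff.2 (lt_add_one _))

theorem integral_scaledGamma (m : ℕ) (a : 𝔸) (Δ : ℝ) :
    ∫ t in (0 : ℝ)..Δ, scaledGamma m a t = scaledGamma (m + 1) a Δ := by
  rw [intervalIntegral.integral_eq_sub_of_hasDerivAt
    (fun t _ => hasDerivAt_scaledGamma_succ m a t)
    ((continuous_scaledGamma m a).intervalIntegrable 0 Δ)]
  simp [scaledGamma]

end NormedAlgebra

section Matrix

variable {ι : Type*} [Fintype ι] [DecidableEq ι]

theorem integral_scaledGamma_apply (m : ℕ) (K : Matrix ι ι ℝ) (Δ : ℝ) (i j : ι) :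
    ∫ t in (0 : ℝ)..Δ, scaledGamma m K t i j = scaledGamma (m + 1) K Δ i j := by
  open scoped Matrix.Norms.Operator in
  have h := (LinearMap.toContinuousLinearMap (entryLinearMap ℝ ℝ i j)).intervalIntegral_comp_comm
    ((continuous_scaledGamma m K).intervalIntegrable (μ := MeasureTheory.volume) 0 Δ)
  rw [integral_scaledGamma] at h
  exact h

theorem pow_smul_Gamma_eq_scaledGamma {d : ℕ} (m : ℕ) (K : Matrix (Fin d) (Fin d) ℝ) (t : ℝ) :
    t ^ m • Gamma m (t • K) = scaledGamma m K t := by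
  rw [Gamma, scaledGamma, ← tsum_const_smul'']
  congr 1 with n : 1
  rw [smul_pow, smul_comm (t ^ m), smul_smul (t ^ m), ← pow_add, add_comm m]

end Matrix

theorem integral_gamma_one_eq_gamma_two_general {d : ℕ}
    (K : Matrix (Fin d) (Fin d) ℝ) (Δ : ℝ) :
    (∀ i j : Fin d,
      (∫ t in (0 : ℝ)..Δ, (t • Gamma 1 (t • K)) i j)
        = ((Δ ^ 2) • Gamma 2 (Δ • K)) i j) ∧
    (∀ i j : Fin d,
      (∫ t₂ in (0 : ℝ)..Δ, ∫ t₁ in (0 : ℝ)..t₂, NormedSpace.exp (t₁ • K) i j)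
        = ((Δ ^ 2) • Gamma 2 (Δ • K)) i j) := by
  have hΓ₁ (t : ℝ) : t • Gamma 1 (t • K) = scaledGamma 1 K t := by
    simpa using pow_smul_Gamma_eq_scaledGamma 1 K t
  rw [pow_smul_Gamma_eq_scaledGamma]
  refine ⟨fun i j => ?_, fun i j => ?_⟩
  · simp_rw [hΓ₁, integral_scaledGamma_apply]
  · simp_rw [exp_smul_eq_scaledGamma_zero, integral_scaledGamma_apply]

/-- `∫₀^Δ Γ₁(t K) t dt = Γ₂(Δ K) Δ²` (entrywise integral); equivalently the iterated
integral `∫₀^Δ ∫₀^{t₂} exp(t₁ K) dt₁ dt₂ = Γ₂(Δ K) Δ²`. -/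
theorem integral_gamma_one_eq_gamma_two {d : ℕ} (hd : 0 < d)
    (K : Matrix (Fin d) (Fin d) ℝ) (Δ : ℝ) (hΔ : 0 < Δ) :
    (∀ i j : Fin d,
      (∫ t in (0 : ℝ)..Δ, (t • Gamma 1 (t • K)) i j)
        = ((Δ ^ 2) • Gamma 2 (Δ • K)) i j) ∧
    (∀ i j : Fin d,
      (∫ t₂ in (0 : ℝ)..Δ, ∫ t₁ in (0 : ℝ)..t₂, NormedSpace.exp (t₁ • K) i j)
        = ((Δ ^ 2) • Gamma 2 (Δ • K)) i j) :=
  integral_gamma_one_eq_gamma_two_general K Δ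
end

section
/- Let n be a positive integer, K an n×n real matrix, and Δ > 0. Then ∫₀^Δ Γ₂(t·K)·t² dt = Γ₃(Δ·K)·Δ³, where the integral is taken entrywise. Equivalently, the iterated integral ∫₀^Δ ∫₀^{t₃} ∫₀^{t₂} exp(t₁·K) dt₁ dt₂ dt₃ equals Γ₃(Δ·K)·Δ³. -/
/-!
Entrywise, `t ^ m • Γ_m(t • K)` is the power series `∑ₙ (Kⁿ)ᵢⱼ t^(n+m) / (n+m)!`. Since
`|(Kⁿ)ᵢⱼ| ≤ Sⁿ` with `S = ∑ₚ∑_q |K p q|`, it is dominated between `0` and `x` by a summable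
sequence of constants, so it can be integrated term by term; the `n`-th term integrates to the
`n`-th term of `x^(m+1) • Γ_(m+1)(x • K)`. Starting from `Γ₀ = exp` and applying this three
times gives the iterated integral.
-/

open Matrix

theorem hasSum_intervalIntegral_mul_pow {c : ℕ → ℝ} {f : ℝ → ℝ} {x : ℝ} (k : ℕ)
    (hc : Summable fun n => |c n| * |x| ^ n)
    (hf : ∀ t ∈ Set.uIoc 0 x, HasSum (fun n => c n * t ^ (n + k)) (f t)) :
    HasSum (fun n => c n * (x ^ (n + k + 1) / (n + k + 1))) (∫ t in 0..x, f t) := by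
  have hdom := intervalIntegral.hasSum_integral_of_dominated_convergence
    (μ := MeasureTheory.volume) (F := fun n t => c n * t ^ (n + k))
    (fun n _ => |c n| * |x| ^ (n + k))
    (fun n => (continuous_const.mul (continuous_pow _)).aestronglyMeasurable)
    (fun n => .of_forall fun t ht => by
      have htx : |t| ≤ |x| := by
        simpa using Set.abs_sub_left_of_mem_uIcc (Set.uIoc_subset_uIcc ht)
      rw [norm_mul, norm_pow, Real.norm_eq_abs, Real.norm_eq_abs]
      gcongr)
    (.of_forall fun _ _ => by simpa only [pow_add, mul_assoc] using hc.mul_right (|x| ^ k))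
    intervalIntegrable_const (.of_forall hf)
  simpa [intervalIntegral.integral_const_mul, integral_pow] using hdom

theorem abs_pow_apply_le_pow_sum_abs {ι : Type*} [Fintype ι] [DecidableEq ι]
    (A : Matrix ι ι ℝ) (n : ℕ) (i j : ι) : |(A ^ n) i j| ≤ (∑ p, ∑ q, |A p q|) ^ n := by
  induction n generalizing i j with
  | zero =>
    rw [pow_zero, pow_zero, one_apply]
    split_ifs <;> simp
  | succ n ih =>
    calc |(A ^ (n + 1)) i j| ≤ ∑ k, |(A ^ n) i k| * |A k j| := by
          simpa only [pow_succ, mul_apply, abs_mul] using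
            Finset.abs_sum_le_sum_abs (fun k => (A ^ n) i k * A k j) Finset.univ
      _ ≤ ∑ k, (∑ p, ∑ q, |A p q|) ^ n * ∑ q, |A k q| := by
          gcongr with k
          · exact ih i k
          · exact Finset.single_le_sum (fun q _ => abs_nonneg (A k q)) (Finset.mem_univ j)
      _ = (∑ p, ∑ q, |A p q|) ^ (n + 1) := by rw [← Finset.mul_sum, pow_succ]

section Gamma

variable {d : ℕ}

theorem summable_inv_factorial_mul_abs_pow_apply (m : ℕ) (A : Matrix (Fin d) (Fin d) ℝ)
    (i j : Fin d) : Summable fun n => ((n + m).factorial : ℝ)⁻¹ * |(A ^ n) i j| := by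
  refine (Real.summable_pow_div_factorial (∑ p, ∑ q, |A p q|)).of_nonneg_of_le
    (fun n => by positivity) fun n => ?_
  rw [div_eq_inv_mul]
  gcongr
  · exact Nat.le_add_right n m
  · exact abs_pow_apply_le_pow_sum_abs A n i j

theorem hasSum_Gamma_apply (m : ℕ) (A : Matrix (Fin d) (Fin d) ℝ) (i j : Fin d) :
    HasSum (fun n => ((n + m).factorial : ℝ)⁻¹ * (A ^ n) i j) (Gamma m A i j) := by
  have hsum : Summable fun n => ((n + m).factorial : ℝ)⁻¹ • A ^ n :=
    Pi.summable.mpr fun i => Pi.summable.mpr fun j =>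
      .of_abs (by simpa [abs_mul] using summable_inv_factorial_mul_abs_pow_apply m A i j)
  exact Pi.hasSum.mp (Pi.hasSum.mp hsum.hasSum i) j

theorem Gamma_zero (A : Matrix (Fin d) (Fin d) ℝ) : Gamma 0 A = NormedSpace.exp A := by
  rw [NormedSpace.exp_eq_tsum ℝ, Gamma]
  rfl

theorem intervalIntegral_pow_mul_Gamma_apply (m : ℕ) (K : Matrix (Fin d) (Fin d) ℝ) (x : ℝ)
    (i j : Fin d) :
    ∫ t in 0..x, t ^ m * Gamma m (t • K) i j = x ^ (m + 1) * Gamma (m + 1) (x • K) i j := by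
  set c : ℕ → ℝ := fun n => ((n + m).factorial : ℝ)⁻¹ * (K ^ n) i j
  have hc : Summable fun n => |c n| * |x| ^ n :=
    (summable_inv_factorial_mul_abs_pow_apply m (x • K) i j).congr fun n => by
      simp only [smul_pow, Matrix.smul_apply, smul_eq_mul, abs_mul, abs_pow, abs_inv,
        Nat.abs_cast, c]
      ring
  have hf (t : ℝ) : HasSum (fun n => c n * t ^ (n + m)) (t ^ m * Gamma m (t • K) i j) :=
    ((hasSum_Gamma_apply m (t • K) i j).mul_left (t ^ m)).congr_fun fun n => by
      simp only [pow_add, smul_pow, Matrix.smul_apply, smul_eq_mul, c]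
      ring
  refine (hasSum_intervalIntegral_mul_pow m hc fun t _ => hf t).unique
    (((hasSum_Gamma_apply (m + 1) (x • K) i j).mul_left (x ^ (m + 1))).congr_fun fun n => ?_)
  rw [← add_assoc, Nat.factorial_succ]
  simp only [Nat.cast_mul, Nat.cast_add, Nat.cast_one, _root_.mul_inv_rev, smul_pow,
    Matrix.smul_apply, smul_eq_mul, c]
  field_simp
  ring

theorem intervalIntegral_exp_smul_apply (K : Matrix (Fin d) (Fin d) ℝ) (x : ℝ) (i j : Fin d) :
    ∫ t in 0..x, NormedSpace.exp (t • K) i j = x * Gamma 1 (x • K) i j := by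
  simpa [Gamma_zero] using intervalIntegral_pow_mul_Gamma_apply 0 K x i j

end Gamma

theorem integral_gamma_two_eq_gamma_three_general {d : ℕ}
    (K : Matrix (Fin d) (Fin d) ℝ) (Δ : ℝ) :
    (∀ i j : Fin d,
      (∫ t in (0 : ℝ)..Δ, ((t ^ 2) • Gamma 2 (t • K)) i j)
        = ((Δ ^ 3) • Gamma 3 (Δ • K)) i j) ∧
    (∀ i j : Fin d,
      (∫ t₃ in (0 : ℝ)..Δ, ∫ t₂ in (0 : ℝ)..t₃, ∫ t₁ in (0 : ℝ)..t₂,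
          NormedSpace.exp (t₁ • K) i j)
        = ((Δ ^ 3) • Gamma 3 (Δ • K)) i j) := by
  refine ⟨fun i j => ?_, fun i j => ?_⟩
  · simpa using intervalIntegral_pow_mul_Gamma_apply 2 K Δ i j
  · calc (∫ t₃ in (0 : ℝ)..Δ, ∫ t₂ in (0 : ℝ)..t₃, ∫ t₁ in (0 : ℝ)..t₂,
            NormedSpace.exp (t₁ • K) i j)
        = ∫ t₃ in (0 : ℝ)..Δ, ∫ t₂ in (0 : ℝ)..t₃, t₂ ^ 1 * Gamma 1 (t₂ • K) i j := by
          simp only [intervalIntegral_exp_smul_apply, pow_one]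
      _ = ((Δ ^ 3) • Gamma 3 (Δ • K)) i j := by
          simp only [intervalIntegral_pow_mul_Gamma_apply, Matrix.smul_apply, smul_eq_mul]

/-- `∫₀^Δ Γ₂(t K) t² dt = Γ₃(Δ K) Δ³` (entrywise integral); equivalently the iterated
integral `∫₀^Δ ∫₀^{t₃} ∫₀^{t₂} exp(t₁ K) dt₁ dt₂ dt₃ = Γ₃(Δ K) Δ³`. -/
theorem integral_gamma_two_eq_gamma_three {d : ℕ} (hd : 0 < d)
    (K : Matrix (Fin d) (Fin d) ℝ) (Δ : ℝ) (hΔ : 0 < Δ) :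
    (∀ i j : Fin d,
      (∫ t in (0 : ℝ)..Δ, ((t ^ 2) • Gamma 2 (t • K)) i j)
        = ((Δ ^ 3) • Gamma 3 (Δ • K)) i j) ∧
    (∀ i j : Fin d,
      (∫ t₃ in (0 : ℝ)..Δ, ∫ t₂ in (0 : ℝ)..t₃, ∫ t₁ in (0 : ℝ)..t₂,
          NormedSpace.exp (t₁ • K) i j)
        = ((Δ ^ 3) • Gamma 3 (Δ • K)) i j) :=
  integral_gamma_two_eq_gamma_three_general K Δ
end

section
/- Let n be a positive integer and let A, B be n×n real matrices. Define Φ : ℝ → n×n real matrices by Φ(t) = −exp(−t·A)·Γ₁(t·B)·t. Then Φ(0) = 0 and, for every t ∈ ℝ, Φ is differentiable at t with Φ'(t) = −A·Φ(t) − exp(−t·A)·exp(t·B). (This is the closed-form solution for the state transition matrix block Φ₁₄ satisfying the differential equation Φ̇₁₄ = −(ω_ie×)Φ₁₄ − C̃, with A = skew(ω_ie) and C̃(t) = exp(−tA)exp(tB).) -/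
open Matrix

attribute [local instance] Matrix.linftyOpNormedAddCommGroup Matrix.linftyOpNormedSpace

/-! The series `t • Γ₁(t • B) = Σ tⁿ⁺¹/(n+1)! • Bⁿ` differentiates termwise to the
exponential series of `t • B` (on `|t| < R` the derivative series is dominated by that of
`exp (R • B)`); the product rule with `d/dt exp(-t • A) = -A exp(-t • A)` then gives the
differential equation. -/

open Nat NormedSpace

section NormedAlgebra

variable {𝔸 : Type*} [NormedRing 𝔸] [NormedAlgebra ℝ 𝔸] [CompleteSpace 𝔸]

theorem hasDerivAt_tsum_factorial_succ_inv_smul_pow (B : 𝔸) (t : ℝ) :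
    HasDerivAt (fun s : ℝ => ∑' n : ℕ, ((n + 1)! : ℝ)⁻¹ • (s ^ (n + 1) • B ^ n))
      (exp (t • B)) t := by
  set R : ℝ := |t| + 1
  have hterm (n : ℕ) (y : ℝ) :
      HasDerivAt (fun s : ℝ => ((n + 1)! : ℝ)⁻¹ • (s ^ (n + 1) • B ^ n))
        ((n ! : ℝ)⁻¹ • (y • B) ^ n) y := by
    refine (((hasDerivAt_pow (n + 1) y).smul_const (B ^ n)).const_smul
      ((n + 1)! : ℝ)⁻¹).congr_deriv ?_
    rw [smul_pow, smul_smul, smul_smul, Nat.factorial_succ]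
    push_cast
    field_simp
  have hbound (n : ℕ) (y : ℝ) (hy : y ∈ Metric.ball 0 R) :
      ‖(n ! : ℝ)⁻¹ • (y • B) ^ n‖ ≤ ‖(n ! : ℝ)⁻¹ • (R • B) ^ n‖ := by
    have hyR : |y| ≤ |R| := by
      rw [mem_ball_zero_iff, Real.norm_eq_abs] at hy
      exact hy.le.trans (le_abs_self R)
    simp only [smul_pow, norm_smul, Real.norm_eq_abs, abs_pow]
    gcongr
  have hsum := hasDerivAt_tsum_of_isPreconnected (norm_expSeries_summable' (R • B))
    Metric.isOpen_ball (convex_ball 0 R).isPreconnected (fun n y _ => hterm n y) hbound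
    (Metric.mem_ball_self (by positivity)) (by simp) (y := t)
    (by rw [mem_ball_zero_iff, Real.norm_eq_abs]; exact lt_add_one _)
  rwa [exp_eq_tsum ℝ]

end NormedAlgebra

attribute [local instance] Matrix.linftyOpNormedRing Matrix.linftyOpNormedAlgebra

theorem smul_Gamma_one_smul {d : ℕ} (B : Matrix (Fin d) (Fin d) ℝ) (t : ℝ) :
    t • Gamma 1 (t • B) = ∑' n : ℕ, ((n + 1)! : ℝ)⁻¹ • (t ^ (n + 1) • B ^ n) := by
  rw [Gamma, ← tsum_const_smul'' t]
  refine tsum_congr fun n => ?_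
  simp only [smul_pow, smul_smul]
  ring_nf

theorem hasDerivAt_smul_Gamma_one_smul {d : ℕ} (B : Matrix (Fin d) (Fin d) ℝ) (t : ℝ) :
    HasDerivAt (fun s : ℝ => s • Gamma 1 (s • B)) (exp (t • B)) t :=
  (hasDerivAt_tsum_factorial_succ_inv_smul_pow B t).congr_of_eventuallyEq
    (Filter.Eventually.of_forall fun s => smul_Gamma_one_smul B s)

theorem phi14_closed_form_general {d : ℕ}
    (A B : Matrix (Fin d) (Fin d) ℝ)
    (Φ : ℝ → Matrix (Fin d) (Fin d) ℝ)
    (hΦ : ∀ t : ℝ, Φ t = -(t • (NormedSpace.exp (-(t • A)) * Gamma 1 (t • B)))) :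
    Φ 0 = 0 ∧
      ∀ t : ℝ, HasDerivAt Φ
        (-(A * Φ t) - NormedSpace.exp (-(t • A)) * NormedSpace.exp (t • B)) t := by
  have hΦ' : Φ = fun s => -(exp (s • -A) * (s • Gamma 1 (s • B))) := by
    funext s
    rw [hΦ, mul_smul_comm, smul_neg]
  refine ⟨by simp [hΦ], fun t => ?_⟩
  have hprod : HasDerivAt (fun s => -(exp (s • -A) * (s • Gamma 1 (s • B)))) _ t :=
    ((hasDerivAt_exp_smul_const' (-A) t).mul (hasDerivAt_smul_Gamma_one_smul B t)).neg
  rw [← hΦ'] at hprod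
  refine hprod.congr_deriv ?_
  rw [hΦ t, smul_neg, mul_smul_comm]
  simp only [neg_mul, mul_neg, neg_neg, mul_smul_comm, mul_assoc, smul_neg, neg_add, sub_eq_add_neg]
  -- the sides now differ only in the instance path (`Matrix` vs. `linftyOpNormedRing`)
  rfl

/-- The closed-form state transition block `Φ(t) = −exp(−t A) Γ₁(t B) t` satisfies
`Φ(0) = 0` and `Φ'(t) = −A Φ(t) − exp(−t A) exp(t B)`. -/
theorem phi14_closed_form {d : ℕ} (hd : 0 < d)
    (A B : Matrix (Fin d) (Fin d) ℝ)
    (Φ : ℝ → Matrix (Fin d) (Fin d) ℝ)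
    (hΦ : ∀ t : ℝ, Φ t = -(t • (NormedSpace.exp (-(t • A)) * Gamma 1 (t • B)))) :
    Φ 0 = 0 ∧
      ∀ t : ℝ, HasDerivAt Φ
        (-(A * Φ t) - NormedSpace.exp (-(t • A)) * NormedSpace.exp (t • B)) t :=
  phi14_closed_form_general A B Φ hΦ
end
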